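/- Let D = (E, F) be a vf-safe delta-matroid. Then the partial-(*×*) polynomial of D is a monomial c·z^m if and only if F = {∅}. -/

import Mathlib

open Finset Polynomial

variable {α : Type*} [DecidableEq α]

/-- The twist of a collection of feasible sets with respect to `A`. -/
noncomputable def SS.twist (A : Finset α) (F : Finset (Finset α)) : Finset (Finset α) :=
  F.image (fun X => symmDiff A X)

/-- Loop complementation at a single element `e`. -/
noncomputable def SS.lc (e : α) (F : Finset (Finset α)) : Finset (Finset α) :=
  symmDiff F ((F.filter (fun X => e ∉ X)).image (insert e))

/-- The two generating operations: twist `*` and loop complementation `×`. -/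
inductive SS.Op | star | cross

/-- Apply a single operation at a single element. -/
noncomputable def SS.opElem : SS.Op → α → Finset (Finset α) → Finset (Finset α)
  | .star, e, F => SS.twist {e} F
  | .cross, e, F => SS.lc e F

/-- Apply a word in `{*, ×}` at a single element. -/
noncomputable def SS.wordElem (w : List SS.Op) (e : α) (F : Finset (Finset α)) : Finset (Finset α) :=
  w.foldl (fun F o => SS.opElem o e F) F

/-- Apply a word in `{*, ×}` elementwise on a subset `A`. -/
noncomputable def SS.wordOn (w : List SS.Op) (A : Finset α) (F : Finset (Finset α)) : Finset (Finset α) :=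
  A.toList.foldl (fun F e => SS.wordElem w e F) F

/-- Size of a largest feasible set. -/
noncomputable def SS.rmax (F : Finset (Finset α)) : ℕ := F.sup Finset.card

/-- Size of a smallest feasible set. -/
noncomputable def SS.rmin (F : Finset (Finset α)) : ℕ := sInf (Finset.card '' (F : Set (Finset α)))

/-- The width of a set system. -/
noncomputable def SS.width (F : Finset (Finset α)) : ℕ := SS.rmax F - SS.rmin F

/-- The minimum-cardinality feasible sets. -/
noncomputable def SS.Fmin (F : Finset (Finset α)) : Finset (Finset α) :=
  F.filter (fun X => X.card = SS.rmin F)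

/-- The maximum-cardinality feasible sets. -/
noncomputable def SS.Fmax (F : Finset (Finset α)) : Finset (Finset α) :=
  F.filter (fun X => X.card = SS.rmax F)

/-- The partial-`w` polynomial of a set system with ground set `E`. -/
noncomputable def SS.poly (w : List SS.Op) (E : Finset α) (F : Finset (Finset α)) :
    Polynomial ℤ :=
  ∑ A ∈ E.powerset, (Polynomial.X : Polynomial ℤ) ^ SS.width (SS.wordOn w A F)

/-- A proper set system satisfying the symmetric exchange axiom. -/
noncomputable def SS.IsDeltaMatroid (F : Finset (Finset α)) : Prop :=
  F.Nonempty ∧ ∀ X ∈ F, ∀ Y ∈ F, ∀ u ∈ symmDiff X Y,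
    ∃ v ∈ symmDiff X Y, symmDiff X {u, v} ∈ F

/-- Apply a sequence of single-element twists and loop complementations. -/
noncomputable def SS.seqApply : List (SS.Op × α) → Finset (Finset α) → Finset (Finset α)
  | [], F => F
  | (o, e) :: s, F => SS.seqApply s (SS.opElem o e F)

/-- A set system is vf-safe if every sequence of single-element twists and loop
complementations yields a delta-matroid. -/
noncomputable def SS.VfSafe (F : Finset (Finset α)) : Prop :=
  ∀ s : List (SS.Op × α), SS.IsDeltaMatroid (SS.seqApply s F)

/-- The direct sum of two set systems. -/
noncomputable def SS.dsum (F F' : Finset (Finset α)) : Finset (Finset α) :=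
  (F ×ˢ F').image (fun p => p.1 ∪ p.2)

open SS

lemma symmDiff_singleton' (e : α) (X : Finset α) :
    symmDiff {e} X = if e ∈ X then X.erase e else insert e X := by
  ext a; by_cases he : e ∈ X <;> by_cases hae : a = e <;>
    simp [Finset.mem_symmDiff, he, hae]

lemma mem_twist {A X : Finset α} {F : Finset (Finset α)} :
    X ∈ twist A F ↔ symmDiff A X ∈ F := by
  simp only [twist, mem_image]
  constructor
  · rintro ⟨Y, hY, rfl⟩; rwa [symmDiff_symmDiff_cancel_left]
  · intro h; exact ⟨_, h, symmDiff_symmDiff_cancel_left _ _⟩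

lemma mem_lc {e : α} {X : Finset α} {G : Finset (Finset α)} :
    X ∈ lc e G ↔ ((X ∈ G ∧ ¬(e ∈ X ∧ X.erase e ∈ G)) ∨ ((e ∈ X ∧ X.erase e ∈ G) ∧ X ∉ G)) := by
  have himg : X ∈ (G.filter (fun Y => e ∉ Y)).image (insert e) ↔ (e ∈ X ∧ X.erase e ∈ G) := by
    simp only [mem_image, mem_filter]
    constructor
    · rintro ⟨Y, ⟨hY, heY⟩, rfl⟩
      exact ⟨mem_insert_self _ _, by rwa [erase_insert heY]⟩
    · rintro ⟨heX, hG⟩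
      exact ⟨X.erase e, ⟨hG, notMem_erase _ _⟩, insert_erase heX⟩
  rw [lc, Finset.mem_symmDiff, himg]

/-- membership in the `*×*` single-element operation -/
lemma mem_W {e : α} {X : Finset α} {F : Finset (Finset α)} :
    X ∈ wordElem [Op.star, Op.cross, Op.star] e F ↔
      ((e ∈ X ∧ X ∈ F) ∨
        (e ∉ X ∧ ((X ∈ F ∧ insert e X ∉ F) ∨ (X ∉ F ∧ insert e X ∈ F)))) := by
  show X ∈ twist {e} (lc e (twist {e} F)) ↔ _
  rw [mem_twist, mem_lc, symmDiff_singleton']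
  by_cases he : e ∈ X
  · simp only [he, if_true, mem_twist, symmDiff_singleton', notMem_erase, if_false,
      insert_erase he]
    tauto
  · simp only [he, if_false, mem_twist, symmDiff_singleton', mem_insert_self, if_true,
      erase_insert he]
    tauto

/-- Abbreviation for the single-element `*×*` operation. -/
noncomputable def Wse (e : α) (F : Finset (Finset α)) : Finset (Finset α) :=
  wordElem [Op.star, Op.cross, Op.star] e F

lemma mem_Wse {e : α} {X : Finset α} {F : Finset (Finset α)} :
    X ∈ Wse e F ↔
      ((e ∈ X ∧ X ∈ F) ∨
        (e ∉ X ∧ ((X ∈ F ∧ insert e X ∉ F) ∨ (X ∉ F ∧ insert e X ∈ F)))) := mem_W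

lemma le_rmax {X : Finset α} {F : Finset (Finset α)} (h : X ∈ F) : X.card ≤ rmax F :=
  Finset.le_sup h

lemma rmin_le {X : Finset α} {F : Finset (Finset α)} (h : X ∈ F) : rmin F ≤ X.card :=
  Nat.sInf_le ⟨X, h, rfl⟩

lemma exists_rmin {F : Finset (Finset α)} (h : F.Nonempty) : ∃ X ∈ F, X.card = rmin F := by
  have : (Finset.card '' (F : Set (Finset α))).Nonempty := ⟨h.choose.card, h.choose, h.choose_spec, rfl⟩
  obtain ⟨X, hX, hc⟩ := Nat.sInf_mem this
  exact ⟨X, hX, hc⟩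

lemma exists_rmax {F : Finset (Finset α)} (h : F.Nonempty) : ∃ X ∈ F, X.card = rmax F := by
  obtain ⟨X, hX, hc⟩ := Finset.exists_mem_eq_sup F h Finset.card
  exact ⟨X, hX, hc.symm⟩

lemma max_mem_Wse {e : α} {Y : Finset α} {F : Finset (Finset α)}
    (hY : Y ∈ F) (hc : Y.card = rmax F) : Y ∈ Wse e F := by
  rw [mem_Wse]
  by_cases he : e ∈ Y
  · exact Or.inl ⟨he, hY⟩
  · refine Or.inr ⟨he, Or.inl ⟨hY, fun hins => ?_⟩⟩
    have := le_rmax hins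
    rw [card_insert_of_notMem he] at this
    omega

lemma rmax_Wse {e : α} {F : Finset (Finset α)} (h : F.Nonempty) : rmax (Wse e F) = rmax F := by
  apply le_antisymm
  · apply Finset.sup_le
    intro X hX
    rw [mem_Wse] at hX
    rcases hX with ⟨_, hX⟩ | ⟨_, ⟨hX, _⟩ | ⟨_, hX⟩⟩
    · exact le_rmax hX
    · exact le_rmax hX
    · exact le_trans (card_le_card (subset_insert _ _)) (le_rmax hX)
  · obtain ⟨Y, hY, hc⟩ := exists_rmax h
    exact hc ▸ le_rmax (max_mem_Wse hY hc)

lemma Wse_nonempty {e : α} {F : Finset (Finset α)} (h : F.Nonempty) : (Wse e F).Nonempty := by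
  obtain ⟨Y, hY, hc⟩ := exists_rmax h
  exact ⟨Y, max_mem_Wse hY hc⟩

/-- Lemma A : if the minimum feasible size is positive, applying `*×*` at an element of a
minimum feasible set changes the width. -/
lemma widthA {e : α} {X : Finset α} {F : Finset (Finset α)}
    (hX : X ∈ F) (hc : X.card = rmin F) (hpos : 0 < rmin F) (he : e ∈ X) :
    width (Wse e F) ≠ width F := by
  have hne : F.Nonempty := ⟨X, hX⟩
  have hmem : X.erase e ∈ Wse e F := by
    rw [mem_Wse]
    refine Or.inr ⟨notMem_erase _ _, Or.inr ⟨fun hmem => ?_, by rwa [insert_erase he]⟩⟩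
    have := rmin_le hmem
    rw [card_erase_of_mem he] at this
    omega
  have h1 : rmin (Wse e F) ≤ X.card - 1 := by
    have := rmin_le hmem
    rwa [card_erase_of_mem he] at this
  have h2 : rmax (Wse e F) = rmax F := rmax_Wse hne
  have h3 : rmin F ≤ rmax F := hc ▸ le_rmax hX
  unfold width
  omega

/-- Lemma B : if both `∅` and `{e}` are feasible, applying `*×*` at `e` changes the width. -/
lemma widthB {e : α} {F : Finset (Finset α)} (h0 : (∅ : Finset α) ∈ F) (he : {e} ∈ F) :
    width (Wse e F) ≠ width F := by
  have hne : F.Nonempty := ⟨∅, h0⟩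
  have hmin : rmin F = 0 := Nat.le_zero.mp (by simpa using rmin_le h0)
  have hmax : 1 ≤ rmax F := by simpa using le_rmax he
  have hW : rmax (Wse e F) = rmax F := rmax_Wse hne
  have h1 : 1 ≤ rmin (Wse e F) := by
    obtain ⟨Z, hZ, hc⟩ := exists_rmin (Wse_nonempty (e := e) hne)
    rcases Nat.eq_zero_or_pos Z.card with h | h
    · exfalso
      rw [Finset.card_eq_zero] at h
      subst h
      rw [mem_Wse] at hZ
      simp only [notMem_empty, false_and, insert_empty_eq] at hZ
      tauto
    · omega
  unfold width
  omega

lemma wordOn_empty (w : List Op) (F : Finset (Finset α)) : wordOn w ∅ F = F := by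
  simp [wordOn]

lemma wordOn_singleton (w : List Op) (e : α) (F : Finset (Finset α)) :
    wordOn w {e} F = wordElem w e F := by
  simp [wordOn, Finset.toList_singleton]

lemma toList_pair {u v : α} (h : u ≠ v) :
    ({u, v} : Finset α).toList = [u, v] ∨ ({u, v} : Finset α).toList = [v, u] := by
  have hlen : (({u, v} : Finset α).toList).length = 2 := by
    rw [Finset.length_toList, card_insert_of_notMem (by simp [h]), card_singleton]
  obtain ⟨a, b, hab⟩ := List.length_eq_two.mp hlen
  have hnd := Finset.nodup_toList ({u, v} : Finset α)
  rw [hab] at hnd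
  have hab' : a ≠ b := by simp at hnd; tauto
  have hu : u = a ∨ u = b := by
    have : u ∈ ({u, v} : Finset α).toList := by simp [Finset.mem_toList]
    rw [hab] at this; simpa using this
  have hv : v = a ∨ v = b := by
    have : v ∈ ({u, v} : Finset α).toList := by simp [Finset.mem_toList]
    rw [hab] at this; simpa using this
  rcases hu with rfl | rfl <;> rcases hv with rfl | rfl
  · exact absurd rfl h
  · exact Or.inl hab
  · exact Or.inr hab
  · exact absurd rfl h

lemma wordOn_pair {u v : α} (h : u ≠ v) (w : List Op) (F : Finset (Finset α)) :
    wordOn w {u, v} F = wordElem w v (wordElem w u F) ∨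
      wordOn w {u, v} F = wordElem w u (wordElem w v F) := by
  rcases toList_pair h with hl | hl
  · exact Or.inl (by rw [wordOn, hl]; rfl)
  · exact Or.inr (by rw [wordOn, hl]; rfl)

/-- The key combinatorial lemma: if all partial `*×*`-widths agree, then `F = {∅}`. -/
lemma main_key (E : Finset α) (F : Finset (Finset α)) (hF : ∀ X ∈ F, X ⊆ E)
    (hvf : SS.VfSafe F)
    (hall : ∀ A ∈ E.powerset,
      width (wordOn [Op.star, Op.cross, Op.star] A F) = width F) :
    F = {(∅ : Finset α)} := by
  have hdm : IsDeltaMatroid F := hvf []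
  obtain ⟨hne, hex⟩ := hdm
  -- Step 1: rmin F = 0, i.e. ∅ ∈ F
  have hmin0 : rmin F = 0 := by
    by_contra hpos
    obtain ⟨X, hX, hc⟩ := exists_rmin hne
    have hXne : X.Nonempty := by
      rw [← Finset.card_pos, hc]; omega
    obtain ⟨e, he⟩ := hXne
    have heE : e ∈ E := hF X hX he
    have := hall {e} (by simpa using heE)
    rw [wordOn_singleton] at this
    exact widthA hX hc (by omega) he this
  have h0 : (∅ : Finset α) ∈ F := by
    obtain ⟨X, hX, hc⟩ := exists_rmin hne
    rw [hmin0, Finset.card_eq_zero] at hc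
    rwa [hc] at hX
  -- Step 2: no singletons in F
  have hsing : ∀ e : α, ({e} : Finset α) ∉ F := by
    intro e he
    have heE : e ∈ E := hF {e} he (mem_singleton_self e)
    have := hall {e} (by simpa using heE)
    rw [wordOn_singleton] at this
    exact widthB h0 he this
  -- Step 3: conclude
  by_contra hFne
  -- there is a nonempty feasible set
  have : ∃ Y ∈ F, Y ≠ ∅ := by
    by_contra hx
    push_neg at hx
    apply hFne
    apply Finset.Subset.antisymm
    · intro Y hY
      rw [Finset.mem_singleton]
      exact hx Y hY
    · simpa using h0
  obtain ⟨Y, hY, hYne⟩ := this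
  obtain ⟨u, hu⟩ := Finset.nonempty_iff_ne_empty.mpr hYne
  have hsd : ∀ Z : Finset α, symmDiff ∅ Z = Z := fun Z => bot_symmDiff Z
  have husd : u ∈ symmDiff (∅ : Finset α) Y := by rwa [hsd]
  obtain ⟨v, hvsd, hpair⟩ := hex ∅ h0 Y hY u husd
  rw [hsd] at hvsd hpair
  have huv : u ≠ v := by
    rintro rfl
    have : ({u, u} : Finset α) = {u} := by simp
    rw [this] at hpair
    exact hsing u hpair
  have huE : u ∈ E := hF Y hY hu
  have hvE : v ∈ E := hF Y hY hvsd
  -- {u, v} ∈ F, ∅ ∈ F, no singletons.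
  -- helper: for (a, b) with {a, b} ∈ F etc., width of W b (W a F) < width F
  have helper : ∀ a b : α, a ≠ b → ({a, b} : Finset α) ∈ F → a ∈ E →
      width (Wse b (Wse a F)) ≠ width F := by
    intro a b hab habF haE
    have h0' : (∅ : Finset α) ∈ Wse a F := by
      rw [mem_Wse]
      refine Or.inr ⟨notMem_empty a, Or.inl ⟨h0, ?_⟩⟩
      rw [insert_empty_eq]
      exact hsing a
    have hb' : ({b} : Finset α) ∈ Wse a F := by
      rw [mem_Wse]
      refine Or.inr ⟨by simpa using hab, Or.inr ⟨hsing b, habF⟩⟩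
    have hWa : width (Wse a F) = width F := by
      have := hall {a} (by simpa using haE)
      rwa [wordOn_singleton] at this
    have := widthB h0' hb'
    rw [hWa] at this
    exact this
  have hAll : width (wordOn [Op.star, Op.cross, Op.star] {u, v} F) = width F :=
    hall {u, v} (by simp [Finset.insert_subset_iff, huE, hvE])
  rcases wordOn_pair huv [Op.star, Op.cross, Op.star] F with hw | hw <;> rw [hw] at hAll
  · exact helper u v huv hpair huE hAll
  · refine helper v u (Ne.symm huv) ?_ hvE hAll
    rwa [Finset.pair_comm]

lemma Wse_singleton_empty (e : α) : Wse e ({∅} : Finset (Finset α)) = {∅} := by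
  ext X
  rw [mem_Wse]
  simp only [Finset.mem_singleton]
  constructor
  · rintro (⟨he, rfl⟩ | ⟨he, ⟨rfl, _⟩ | ⟨_, h2⟩⟩)
    · exact absurd he (notMem_empty e)
    · rfl
    · exact absurd h2 (insert_ne_empty e X)
  · rintro rfl
    exact Or.inr ⟨notMem_empty e, Or.inl ⟨rfl, fun h => insert_ne_empty e ∅ h⟩⟩

lemma foldl_fixed : ∀ l : List α,
    l.foldl (fun F e => wordElem [Op.star, Op.cross, Op.star] e F) ({∅} : Finset (Finset α)) = {∅}
  | [] => rfl
  | e :: l => by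
    rw [List.foldl_cons]
    have he : wordElem [Op.star, Op.cross, Op.star] e ({∅} : Finset (Finset α)) = {∅} :=
      Wse_singleton_empty e
    rw [he]
    exact foldl_fixed l

lemma wordOn_fixed (A : Finset α) :
    wordOn [Op.star, Op.cross, Op.star] A ({∅} : Finset (Finset α)) = {∅} :=
  foldl_fixed A.toList

lemma width_singleton_empty : width ({∅} : Finset (Finset α)) = 0 := by
  have h1 : rmax ({∅} : Finset (Finset α)) = 0 := by simp [rmax]
  simp [width, h1]

theorem stmt19 (E : Finset α) (F : Finset (Finset α)) (hF : ∀ X ∈ F, X ⊆ E)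
    (hvf : SS.VfSafe F) :
    (∃ c : ℤ, c ≠ 0 ∧ ∃ m : ℕ,
        SS.poly [SS.Op.star, SS.Op.cross, SS.Op.star] E F =
          Polynomial.C c * Polynomial.X ^ m) ↔ F = {(∅ : Finset α)} := by
  constructor
  · rintro ⟨c, hc, m, hpoly⟩
    apply main_key E F hF hvf
    have hAm : ∀ A ∈ E.powerset,
        width (wordOn [Op.star, Op.cross, Op.star] A F) = m := by
      intro A hA
      by_contra hk
      set k := width (wordOn [Op.star, Op.cross, Op.star] A F) with hkdef
      have hco := congrArg (fun p => Polynomial.coeff p k) hpoly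
      simp only [poly, Polynomial.finset_sum_coeff, Polynomial.coeff_C_mul,
        Polynomial.coeff_X_pow, if_neg hk, mul_zero] at hco
      have hpos : 0 < ∑ B ∈ E.powerset,
          (if k = width (wordOn [Op.star, Op.cross, Op.star] B F) then (1 : ℤ) else 0) := by
        apply Finset.sum_pos'
        · intro B _
          split <;> norm_num
        · exact ⟨A, hA, by rw [if_pos hkdef]; norm_num⟩
      rw [hco] at hpos
      exact lt_irrefl 0 hpos
    have hwF : width F = m := by
      have := hAm ∅ (Finset.empty_mem_powerset E)
      rwa [wordOn_empty] at this
    intro A hA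
    rw [hAm A hA, hwF]
  · rintro rfl
    refine ⟨2 ^ E.card, by positivity, 0, ?_⟩
    rw [poly]
    have hterm : ∀ A ∈ E.powerset,
        (Polynomial.X : Polynomial ℤ) ^ width (wordOn [Op.star, Op.cross, Op.star] A
          ({∅} : Finset (Finset α))) = 1 := by
      intro A _
      rw [wordOn_fixed, width_singleton_empty, pow_zero]
    rw [Finset.sum_congr rfl hterm, Finset.sum_const, Finset.card_powerset]
    simp [nsmul_eq_mul]
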